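/- Let n ≥ 3 and P = ℚ[X₁,…,X_{2n}]. Let 𝔟⁺ be the ideal of P generated by all Xᵢ² (i = 1,…,2n) and all e_{n−1}(Xᵢ : i ∈ {1} ∪ T) for subsets T ⊆ {2,…,2n} with |T| = n−1, where e_{n−1} is the elementary symmetric polynomial of degree n−1. Then for every a₁,…,a_{2n} ∈ ℚ, one has (a₁X₁ + ⋯ + a_{2n}X_{2n})^{n−1} ∈ 𝔟⁺ if and only if (∏_{k∈K} a_k)·(a₁ − ∑_{j∈{2,…,2n}∖K} a_j) = 0 for every subset K ⊆ {2,…,2n} with |K| = n−2. -/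

import Mathlib

/-!
Modulo the squares `Xᵢ²` the variables are square-zero, so `(∑ aᵢXᵢ)^(n-1)` is congruent to
`(n-1)!` times `∑_{|S|=n-1} a^S X^S`. Splitting off `X₁ = X i₀`, this sum equals a combination
`∑_T a^T e_{n-1}(X_{i₀ ∪ T})` of generators plus `X i₀ * ∑_K c_K X^K`, where `c_K` is the expression
in the statement. The `c_K` are detected by the functionals `dualFunctional i₀ K`, which vanish on
the whole ideal: on a multiple `p * e_{n-1}(X_{i₀ ∪ T})` they only see the constant term of `p`,
and the coefficient of `X_{i₀ ∪ K}` is cancelled by that of `X_{j ∪ K}` for the unique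
`j ∈ T \ K` when `K ⊆ T`.
-/

open MvPolynomial Finset

noncomputable section

/-- e_j(Xᵢ : i ∈ I), the elementary symmetric polynomial in the variables indexed by I. -/
def esF {N : ℕ} (I : Finset (Fin N)) (j : ℕ) : MvPolynomial (Fin N) ℚ :=
  ∑ J ∈ powersetCard j I, ∏ i ∈ J, X i

open Nat

section SquareZero

variable {ι R : Type*} [DecidableEq ι]

theorem Finset.insert_eq_insert_iff_of_notMem {a : ι} {s t : Finset ι} (hs : a ∉ s) (ht : a ∉ t) :
    insert a s = insert a t ↔ s = t :=
  ⟨fun h => by rw [← erase_insert hs, ← erase_insert ht, h], congrArg _⟩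

theorem Finset.sum_powersetCard_succ_insert_prod [CommSemiring R] {a : ι} {s : Finset ι}
    (ha : a ∉ s) (k : ℕ) (f : ι → R) :
    ∑ t ∈ powersetCard (k + 1) (insert a s), ∏ i ∈ t, f i =
      ∑ t ∈ powersetCard (k + 1) s, ∏ i ∈ t, f i + f a * ∑ t ∈ powersetCard k s, ∏ i ∈ t, f i := by
  have not_mem {t} (ht : t ∈ powersetCard k s) : a ∉ t := fun h => ha ((mem_powersetCard.mp ht).1 h)
  have hdisj : Disjoint (powersetCard (k + 1) s) ((powersetCard k s).image (insert a)) := by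
    refine disjoint_left.mpr fun t ht ht' => ?_
    obtain ⟨u, -, rfl⟩ := mem_image.mp ht'
    exact ha ((mem_powersetCard.mp ht).1 (mem_insert_self a u))
  have hinj : Set.InjOn (insert a) (powersetCard k s : Set (Finset ι)) := fun u hu v hv huv =>
    (insert_eq_insert_iff_of_notMem (not_mem hu) (not_mem hv)).mp huv
  rw [powersetCard_succ_insert ha, sum_union hdisj, sum_image hinj, mul_sum]
  exact congrArg _ (sum_congr rfl fun u hu => prod_insert (not_mem hu))

theorem Finset.sum_powersetCard_succ_sum_powersetCard [AddCommMonoid R] (U : Finset ι) (k : ℕ)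
    (f : Finset ι → Finset ι → R) :
    ∑ T ∈ powersetCard (k + 1) U, ∑ K ∈ powersetCard k T, f T K =
      ∑ K ∈ powersetCard k U, ∑ j ∈ U \ K, f (insert j K) K := by
  symm
  rw [sum_sigma', sum_sigma']
  refine sum_bij (fun p _ => ⟨insert p.2 p.1, p.1⟩) ?_ ?_ ?_ fun _ _ => rfl
  · rintro ⟨K, j⟩ hp
    simp only [mem_sigma, mem_powersetCard, mem_sdiff] at hp ⊢
    refine ⟨⟨insert_subset hp.2.1 hp.1.1, ?_⟩, subset_insert _ _, hp.1.2⟩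
    rw [card_insert_of_notMem hp.2.2, hp.1.2]
  · rintro ⟨K, j⟩ hp ⟨K', j'⟩ hp' h
    simp only [Sigma.mk.injEq, heq_eq_eq] at h
    obtain ⟨hins, rfl⟩ := h
    simp only [mem_sigma, mem_sdiff] at hp
    rw [(insert_inj hp.2.2).mp hins]
  · rintro ⟨T, K⟩ hp
    simp only [mem_sigma, mem_powersetCard] at hp
    obtain ⟨⟨hTU, hTc⟩, hKT, hKc⟩ := hp
    obtain ⟨j, hj⟩ := card_eq_one.mp (show (T \ K).card = 1 by rw [card_sdiff_of_subset hKT]; omega)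
    have hjTK : j ∈ T \ K := hj ▸ mem_singleton_self j
    refine ⟨⟨K, j⟩, ?_, ?_⟩
    · simp only [mem_sigma, mem_powersetCard, mem_sdiff]
      exact ⟨⟨hKT.trans hTU, hKc⟩, hTU (mem_sdiff.mp hjTK).1, (mem_sdiff.mp hjTK).2⟩
    · simp only [Sigma.mk.injEq, heq_eq_eq, and_true]
      rw [insert_eq, ← hj, sdiff_union_of_subset hKT]

theorem add_pow_succ_of_sq_eq_zero [CommRing R] {u v : R} (hu : u ^ 2 = 0) (m : ℕ) :
    (u + v) ^ (m + 1) = v ^ (m + 1) + (m + 1) * (u * v ^ m) := by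
  induction m with
  | zero => ring
  | succ m ih =>
    rw [pow_succ, ih]
    push_cast
    linear_combination ((m : R) + 1) * v ^ m * hu

theorem Finset.sum_pow_eq_factorial_mul_of_sq_eq_zero [CommRing R] {s : Finset ι} {y : ι → R}
    (hy : ∀ i ∈ s, y i ^ 2 = 0) (m : ℕ) :
    (∑ i ∈ s, y i) ^ m = m ! * ∑ t ∈ powersetCard m s, ∏ i ∈ t, y i := by
  induction s using Finset.induction_on generalizing m with
  | empty =>
    cases m with
    | zero => simp
    | succ k => simp [powersetCard_eq_empty.mpr (by simp : (∅ : Finset ι).card < k + 1)]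
  | insert a s ha ih =>
    have ih := ih fun i hi => hy i (mem_insert_of_mem hi)
    cases m with
    | zero => simp
    | succ k =>
      rw [sum_insert ha, add_pow_succ_of_sq_eq_zero (hy a (mem_insert_self a s)), ih, ih,
        sum_powersetCard_succ_insert_prod ha]
      push_cast [factorial_succ]
      ring

end SquareZero

section SquarefreeMonomial

variable {σ R : Type*}

def sqfreeExp (S : Finset σ) : σ →₀ ℕ := ∑ i ∈ S, Finsupp.single i 1

theorem prod_X_eq_monomial_sqfreeExp [CommSemiring R] (S : Finset σ) :
    ∏ i ∈ S, (X i : MvPolynomial σ R) = monomial (sqfreeExp S) 1 :=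
  (monomial_sum_one S _).symm

variable [DecidableEq σ]

theorem sqfreeExp_apply (S : Finset σ) (i : σ) : sqfreeExp S i = if i ∈ S then 1 else 0 := by
  simp [sqfreeExp, Finsupp.finsetSum_apply, Finsupp.single_apply]

theorem sqfreeExp_le_iff {J D : Finset σ} : sqfreeExp J ≤ sqfreeExp D ↔ J ⊆ D := by
  refine ⟨fun h i hi => ?_, fun h i => ?_⟩
  · have := h i
    simp only [sqfreeExp_apply, if_pos hi] at this
    by_contra hiD
    simp [hiD] at this
  · simp only [sqfreeExp_apply]
    split_ifs with hJ hD <;> first | omega | exact absurd (h hJ) hD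

theorem sqfreeExp_injective : Function.Injective (sqfreeExp : Finset σ → σ →₀ ℕ) :=
  fun _ _ h => (sqfreeExp_le_iff.mp h.le).antisymm (sqfreeExp_le_iff.mp h.ge)

variable [CommSemiring R]

theorem coeff_sqfreeExp_C_mul_prod_X (r : R) (S D : Finset σ) :
    coeff (sqfreeExp D) (C r * ∏ i ∈ S, X i) = if S = D then r else 0 := by
  simp only [prod_X_eq_monomial_sqfreeExp, C_mul_monomial, coeff_monomial, mul_one,
    sqfreeExp_injective.eq_iff]

theorem coeff_sqfreeExp_mul_X_sq (p : MvPolynomial σ R) (i : σ) (D : Finset σ) :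
    coeff (sqfreeExp D) (p * X i ^ 2) = 0 := by
  rw [X_pow_eq_monomial, coeff_mul_monomial', if_neg]
  intro h
  have := h i
  simp only [Finsupp.single_eq_same, sqfreeExp_apply] at this
  split_ifs at this <;> omega

theorem coeff_sqfreeExp_mul_prod_X (p : MvPolynomial σ R) {J D : Finset σ}
    (hJD : J.card = D.card) :
    coeff (sqfreeExp D) (p * ∏ i ∈ J, X i) = if J = D then coeff 0 p else 0 := by
  rw [prod_X_eq_monomial_sqfreeExp, coeff_mul_monomial', mul_one]
  by_cases h : J = D
  · simp [h]
  · rw [if_neg h, if_neg (sqfreeExp_le_iff.not.mpr fun hJ => h (eq_of_subset_of_card_le hJ hJD.ge))]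

theorem coeff_sqfreeExp_mul_sum_prod_X (p : MvPolynomial σ R) (I : Finset σ) {D : Finset σ}
    {m : ℕ} (hD : D.card = m) :
    coeff (sqfreeExp D) (p * ∑ J ∈ powersetCard m I, ∏ i ∈ J, X i) =
      if D ⊆ I then coeff 0 p else 0 := by
  rw [mul_sum, coeff_sum, sum_congr rfl fun J hJ =>
    coeff_sqfreeExp_mul_prod_X p ((mem_powersetCard.mp hJ).2.trans hD.symm), sum_ite_eq']
  simp [mem_powersetCard, hD]

end SquarefreeMonomial

theorem Ideal.map_eq_zero_of_mem_span {R M : Type*} [CommSemiring R] [AddCommMonoid M]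
    (ℓ : R →+ M) {s : Set R} (h : ∀ g ∈ s, ∀ p, ℓ (p * g) = 0) {f : R}
    (hf : f ∈ Ideal.span s) : ℓ f = 0 := by
  suffices ∀ p, ℓ (p * f) = 0 by simpa using this 1
  induction hf using Submodule.span_induction with
  | mem g hg => exact h g hg
  | zero => simp
  | add x y _ _ hx hy => intro p; rw [mul_add, map_add, hx, hy, add_zero]
  | smul r x _ hx => intro p; rw [smul_eq_mul, ← mul_assoc]; exact hx _

section DualFunctional

variable {σ R : Type*} [DecidableEq σ] [Fintype σ] [CommRing R]

def dualFunctional (i₀ : σ) (K : Finset σ) : MvPolynomial σ R →ₗ[R] R :=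
  lcoeff R (sqfreeExp (insert i₀ K)) - ∑ j ∈ univ.erase i₀ \ K, lcoeff R (sqfreeExp (insert j K))

theorem dualFunctional_apply (i₀ : σ) (K : Finset σ) (f : MvPolynomial σ R) :
    dualFunctional i₀ K f =
      coeff (sqfreeExp (insert i₀ K)) f -
        ∑ j ∈ univ.erase i₀ \ K, coeff (sqfreeExp (insert j K)) f := by
  simp [dualFunctional]

theorem dualFunctional_mul_X_sq (i₀ : σ) (K : Finset σ) (p : MvPolynomial σ R) (i : σ) :
    dualFunctional i₀ K (p * X i ^ 2) = 0 := by
  simp [dualFunctional_apply, coeff_sqfreeExp_mul_X_sq]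

theorem dualFunctional_mul_sum_prod_X {i₀ : σ} {K T : Finset σ} (hK : i₀ ∉ K) (hT : i₀ ∉ T)
    (hcard : T.card = K.card + 1) (p : MvPolynomial σ R) :
    dualFunctional i₀ K (p * ∑ J ∈ powersetCard T.card (insert i₀ T), ∏ i ∈ J, X i) = 0 := by
  have hsub : ∀ j ∈ univ.erase i₀ \ K, (insert j K ⊆ insert i₀ T ↔ j ∈ T ∧ K ⊆ T) := by
    intro j hj
    simp only [mem_sdiff, mem_erase] at hj
    simp [insert_subset_iff, hj.1.1, subset_insert_iff_of_notMem hK]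
  rw [dualFunctional_apply,
    coeff_sqfreeExp_mul_sum_prod_X _ _ (by rw [card_insert_of_notMem hK, hcard]),
    sum_congr rfl fun j hj => coeff_sqfreeExp_mul_sum_prod_X p _
      (by rw [card_insert_of_notMem (mem_sdiff.mp hj).2, hcard]),
    sum_congr rfl fun j hj => if_congr (hsub j hj) rfl rfl]
  simp only [insert_subset_insert_iff hK]
  by_cases hKT : K ⊆ T
  · have hTK : (univ.erase i₀ \ K).filter (· ∈ T) = T \ K := by
      ext j
      simp only [mem_filter, mem_sdiff, mem_erase, mem_univ, and_true]
      exact ⟨fun h => ⟨h.2, h.1.2⟩, fun h => ⟨⟨fun hj => hT (hj ▸ h.1), h.2⟩, h.1⟩⟩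
    simp only [hKT, and_true, if_true]
    rw [← sum_filter, hTK, sum_const, card_sdiff_of_subset hKT, hcard]
    simp
  · simp [hKT]

theorem dualFunctional_X_mul_sum {i₀ : σ} {k : ℕ} {K : Finset σ}
    (hK : K ∈ powersetCard k (univ.erase i₀)) (c : Finset σ → R) :
    dualFunctional i₀ K (X i₀ * ∑ K' ∈ powersetCard k (univ.erase i₀), C (c K') * ∏ i ∈ K', X i) =
      c K := by
  have not_mem {K'} (hK' : K' ∈ powersetCard k (univ.erase i₀)) : i₀ ∉ K' :=
    fun h => notMem_erase i₀ univ ((mem_powersetCard.mp hK').1 h)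
  rw [mul_sum, sum_congr rfl fun K' hK' => show X i₀ * (C (c K') * ∏ i ∈ K', X i) =
    C (c K') * ∏ i ∈ insert i₀ K', X i by rw [prod_insert (not_mem hK')]; ring]
  have hK₀ := not_mem hK
  have hvanish : ∀ j ∈ univ.erase i₀ \ K, ∑ K' ∈ powersetCard k (univ.erase i₀),
      (if insert i₀ K' = insert j K then c K' else 0) = 0 := by
    refine fun j hj => sum_eq_zero fun K' _ => if_neg fun h => ?_
    have hi₀ : i₀ ∈ insert j K := h ▸ mem_insert_self i₀ K'
    obtain ⟨hj₀, -⟩ := mem_erase.mp (mem_sdiff.mp hj).1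
    exact (mem_insert.mp hi₀).elim (fun h => hj₀ h.symm) hK₀
  simp only [dualFunctional_apply, coeff_sum, coeff_sqfreeExp_C_mul_prod_X]
  rw [sum_eq_zero hvanish, sub_zero, sum_congr rfl fun K' hK' =>
    if_congr (insert_eq_insert_iff_of_notMem (not_mem hK') hK₀) rfl rfl, sum_ite_eq', if_pos hK]

end DualFunctional

theorem esF_insert {N : ℕ} {i₀ : Fin N} {T : Finset (Fin N)} (h : i₀ ∉ T) (k : ℕ) :
    esF (insert i₀ T) (k + 1) = esF T (k + 1) + X i₀ * esF T k :=
  sum_powersetCard_succ_insert_prod h k X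

theorem esF_card {N : ℕ} (T : Finset (Fin N)) : esF T T.card = ∏ i ∈ T, X i := by
  rw [esF, powersetCard_self, sum_singleton]

theorem sum_powersetCard_prod_C_mul_X_eq {N : ℕ} (i₀ : Fin N) (a : Fin N → ℚ) (k : ℕ) :
    ∑ S ∈ powersetCard (k + 1) univ, ∏ i ∈ S, C (a i) * X i =
      ∑ T ∈ powersetCard (k + 1) (univ.erase i₀), C (∏ i ∈ T, a i) * esF (insert i₀ T) (k + 1) +
        X i₀ * ∑ K ∈ powersetCard k (univ.erase i₀),
          C ((∏ i ∈ K, a i) * (a i₀ - ∑ j ∈ univ.erase i₀ \ K, a j)) * ∏ i ∈ K, X i := by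
  set U := univ.erase i₀
  have hU : i₀ ∉ U := notMem_erase _ _
  have hY (S : Finset (Fin N)) : ∏ i ∈ S, C (a i) * X i = C (∏ i ∈ S, a i) * ∏ i ∈ S, X i := by
    rw [prod_mul_distrib, map_prod]
  have hT : ∀ T ∈ powersetCard (k + 1) U, C (∏ i ∈ T, a i) * esF (insert i₀ T) (k + 1) =
      ∏ i ∈ T, C (a i) * X i + X i₀ * ∑ K ∈ powersetCard k T, C (∏ i ∈ T, a i) * ∏ i ∈ K, X i := by
    intro T hT
    obtain ⟨hTU, hTc⟩ := mem_powersetCard.mp hT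
    rw [esF_insert (fun h => hU (hTU h)), ← hTc, esF_card, esF, hY, mul_sum, mul_sum, mul_add,
      mul_sum]
    simp only [mul_left_comm]
  have hdouble : ∑ T ∈ powersetCard (k + 1) U, ∑ K ∈ powersetCard k T,
      C (∏ i ∈ T, a i) * ∏ i ∈ K, X i =
        ∑ K ∈ powersetCard k U, C ((∏ i ∈ K, a i) * ∑ j ∈ U \ K, a j) * ∏ i ∈ K, X i := by
    rw [sum_powersetCard_succ_sum_powersetCard]
    refine sum_congr rfl fun K _ => ?_
    rw [← sum_mul, mul_sum, map_sum]
    congr 1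
    refine sum_congr rfl fun j hj => ?_
    rw [prod_insert (mem_sdiff.mp hj).2, mul_comm (a j)]
  rw [← insert_erase (mem_univ i₀), sum_powersetCard_succ_insert_prod hU, sum_congr rfl hT,
    sum_add_distrib, ← mul_sum, hdouble, add_assoc, ← mul_add, ← sum_add_distrib, mul_sum, mul_sum]
  congr 1
  refine sum_congr rfl fun K _ => ?_
  simp only [hY, map_mul, map_sub]
  ring

/-- The ideal `𝔟⁺` for `n - 1 = k + 1`, the distinguished variable `X₁` being `X i₀`. -/
def bPlus {N : ℕ} (i₀ : Fin N) (k : ℕ) : Ideal (MvPolynomial (Fin N) ℚ) :=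
  Ideal.span ({f | ∃ i, f = X i ^ 2} ∪
    {f | ∃ T : Finset (Fin N), i₀ ∉ T ∧ T.card = k + 1 ∧ f = esF (insert i₀ T) (k + 1)})

theorem dualFunctional_eq_zero_of_mem_bPlus {N k : ℕ} {i₀ : Fin N} {K : Finset (Fin N)}
    (hK : i₀ ∉ K) (hKc : K.card = k) {f : MvPolynomial (Fin N) ℚ} (hf : f ∈ bPlus i₀ k) :
    dualFunctional i₀ K f = 0 := by
  refine Ideal.map_eq_zero_of_mem_span (dualFunctional i₀ K).toAddMonoidHom ?_ hf
  rintro g (⟨i, rfl⟩ | ⟨T, hT, hTc, rfl⟩) p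
  · exact dualFunctional_mul_X_sq i₀ K p i
  · rw [← hTc]
    exact dualFunctional_mul_sum_prod_X hK hT (by rw [hTc, hKc]) p

theorem pow_sum_C_mul_X_mem_bPlus_iff {N k : ℕ} (i₀ : Fin N) (a : Fin N → ℚ) :
    (∑ i, C (a i) * X i) ^ (k + 1) ∈ bPlus i₀ k ↔
      ∀ K : Finset (Fin N), i₀ ∉ K → K.card = k →
        (∏ j ∈ K, a j) * (a i₀ - ∑ j ∈ univ.erase i₀ \ K, a j) = 0 := by
  set c : Finset (Fin N) → ℚ := fun K => (∏ j ∈ K, a j) * (a i₀ - ∑ j ∈ univ.erase i₀ \ K, a j)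
  set G := ∑ K ∈ powersetCard k (univ.erase i₀), C (c K) * ∏ i ∈ K, X i
  have hsq : ∀ i ∈ univ, Ideal.Quotient.mk (bPlus i₀ k) (C (a i) * X i) ^ 2 = 0 := by
    intro i _
    rw [← map_pow, Ideal.Quotient.eq_zero_iff_mem, mul_pow]
    exact Ideal.mul_mem_left _ _ (Ideal.subset_span (Or.inl ⟨i, rfl⟩))
  have hgens : ∑ T ∈ powersetCard (k + 1) (univ.erase i₀),
      C (∏ i ∈ T, a i) * esF (insert i₀ T) (k + 1) ∈ bPlus i₀ k := by
    refine Ideal.sum_mem _ fun T hT => Ideal.mul_mem_left _ _ (Ideal.subset_span (Or.inr ?_))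
    obtain ⟨hTU, hTc⟩ := mem_powersetCard.mp hT
    exact ⟨T, fun h => notMem_erase i₀ univ (hTU h), hTc, rfl⟩
  have hpow : Ideal.Quotient.mk (bPlus i₀ k) ((∑ i, C (a i) * X i) ^ (k + 1)) =
      ((k + 1)! : ℚ) • Ideal.Quotient.mk (bPlus i₀ k) (X i₀ * G) := by
    rw [map_pow, map_sum, sum_pow_eq_factorial_mul_of_sq_eq_zero hsq]
    simp_rw [← map_prod, ← map_sum, sum_powersetCard_prod_C_mul_X_eq i₀, map_add,
      Ideal.Quotient.eq_zero_iff_mem.mpr hgens, zero_add]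
    rw [Nat.cast_smul_eq_nsmul, nsmul_eq_mul]
  rw [← Ideal.Quotient.eq_zero_iff_mem, hpow, smul_eq_zero_iff_right (by positivity),
    Ideal.Quotient.eq_zero_iff_mem]
  constructor
  · intro hG K hK hKc
    have hKmem : K ∈ powersetCard k (univ.erase i₀) :=
      mem_powersetCard.mpr ⟨fun j hj => mem_erase.mpr ⟨fun h => hK (h ▸ hj), mem_univ j⟩, hKc⟩
    change c K = 0
    rw [← dualFunctional_X_mul_sum hKmem c]
    exact dualFunctional_eq_zero_of_mem_bPlus hK hKc hG
  · intro hc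
    have hG : G = 0 := sum_eq_zero fun K hK => by
      obtain ⟨hKU, hKc⟩ := mem_powersetCard.mp hK
      rw [show c K = 0 from hc K (fun h => notMem_erase i₀ univ (hKU h)) hKc, map_zero, zero_mul]
    rw [hG, mul_zero]
    exact Ideal.zero_mem _

/-- From the proof of Theorem 6.1: description of the set Z⁺ of (n−1)-nilpotent
degree-one elements of ℬ⁺. -/
theorem stmt19 (n : ℕ) (hn : 3 ≤ n)
    (b : Ideal (MvPolynomial (Fin (2 * n)) ℚ))
    (hb : b = Ideal.span
      ({f | ∃ i : Fin (2 * n), f = X i ^ 2} ∪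
       {f | ∃ T : Finset (Fin (2 * n)), (⟨0, by omega⟩ : Fin (2 * n)) ∉ T ∧ T.card = n - 1 ∧
          f = esF (insert (⟨0, by omega⟩ : Fin (2 * n)) T) (n - 1)}))
    (a : Fin (2 * n) → ℚ) :
    (∑ i, C (a i) * X i) ^ (n - 1) ∈ b ↔
      ∀ K : Finset (Fin (2 * n)), (⟨0, by omega⟩ : Fin (2 * n)) ∉ K → K.card = n - 2 →
        (∏ k ∈ K, a k) *
          (a (⟨0, by omega⟩ : Fin (2 * n)) -
            ∑ j ∈ (Finset.univ.erase (⟨0, by omega⟩ : Fin (2 * n))) \ K, a j) = 0 := by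
  subst hb
  obtain ⟨k, rfl⟩ : ∃ k, n = k + 2 := ⟨n - 2, by omega⟩
  exact pow_sum_C_mul_X_mem_bPlus_iff _ a
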